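/- For all integers x, y not both zero, the value 4x² + 20xy + 4y² is never equal to −2, 0, or 2. -/

import Mathlib

/-!
A multiple of 4 is never ±2. For the value 0: a binary quadratic form whose discriminant is
not a square over ℚ has no nontrivial zero, since a zero `(x, y)` with `y ≠ 0` makes `x / y` a
root of `a t² + b t + c`, and one with `y = 0` forces `a = 0`, making the discriminant `b²`.
Here the discriminant is `20² - 4 · 4 · 4 = 336 = 4² · 21`.
-/

theorem eq_zero_of_quadratic_form_eq_zero {K : Type*} [Field K] {a b c x y : K}
    (hd : ¬ IsSquare (discrim a b c)) (h : a * x ^ 2 + b * x * y + c * y ^ 2 = 0) :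
    x = 0 ∧ y = 0 := by
  by_cases hy : y = 0
  · subst hy
    refine ⟨?_, rfl⟩
    by_contra hx
    have ha : a = 0 := by simpa [hx] using h
    exact hd ⟨b, by simp [discrim, ha, sq]⟩
  · have hroot : a * (x / y * (x / y)) + b * (x / y) + c = 0 := by
      field_simp
      linear_combination h
    exact absurd ⟨_, (discrim_eq_sq_of_quadratic_eq_zero hroot).trans (sq _)⟩ hd

theorem Int.eq_zero_of_quadratic_form_eq_zero {a b c x y : ℤ}
    (hd : ¬ IsSquare (discrim a b c)) (h : a * x ^ 2 + b * x * y + c * y ^ 2 = 0) :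
    x = 0 ∧ y = 0 := by
  rw [← Rat.isSquare_intCast_iff] at hd
  have hq := _root_.eq_zero_of_quadratic_form_eq_zero (x := (x : ℚ)) (y := (y : ℚ))
    (by simpa [discrim] using hd) (by exact_mod_cast h)
  exact_mod_cast hq

/-- For integers x, y not both zero, 4x² + 20xy + 4y² is never −2, 0, or 2. -/
theorem no_vectors_of_square_zero_two_neg_two (x y : ℤ) (h : ¬ (x = 0 ∧ y = 0)) :
    4 * x ^ 2 + 20 * x * y + 4 * y ^ 2 ≠ -2 ∧
    4 * x ^ 2 + 20 * x * y + 4 * y ^ 2 ≠ 0 ∧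
    4 * x ^ 2 + 20 * x * y + 4 * y ^ 2 ≠ 2 := by
  have hdvd : 4 ∣ 4 * x ^ 2 + 20 * x * y + 4 * y ^ 2 := ⟨x ^ 2 + 5 * x * y + y ^ 2, by ring⟩
  have hd : ¬ IsSquare (discrim (4 : ℤ) 20 4) := by norm_num [discrim]
  exact ⟨by omega, fun h0 ↦ h (Int.eq_zero_of_quadratic_form_eq_zero hd h0), by omega⟩
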